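/- arXiv:2504.21115 — 4 statements merged into one kernel-verified Lean document; each statement's English description precedes it below -/
import Mathlib

section
/- For all graphs G and H, if H is not a minor of G, then every graph that contains the 1-subdivision H^(1) of H as an induced minor is not a region intersection graph over G. -/
/-!
Composing an induced-minor model of `H^(1)` in `X` with a region representation of `X` over
`G` represents `H^(1)` itself as a region intersection graph over `G`. In such a
representation the regions of the branch vertices are pairwise disjoint, and so are those of
the subdivision vertices. Orient every edge `uv` of `H`: the region of its subdivision vertex
is connected and meets the regions of `u` and `v`, so it contains a connected piece that
avoids the region of `v`, attaches to the region of `u`, and is adjacent to the region of `v`.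
Adding to the region of each `u` the pieces of the edges oriented out of `u` gives a minor
model of `H` in `G`.
-/

/-- A set of vertices is connected in `G` if the induced subgraph is connected
(in particular, it is nonempty). -/
def ConnectedIn {V : Type*} (G : SimpleGraph V) (S : Set V) : Prop :=
  (G.induce S).Connected

/-- `H` is a minor of `G`: there is a minor model of `H` in `G`, i.e. a family of
nonempty, connected, pairwise disjoint branch sets, with an edge of `G` between the
branch sets of any two vertices adjacent in `H`. -/
def IsMinor {α β : Type*} (H : SimpleGraph α) (G : SimpleGraph β) : Prop :=
  ∃ φ : α → Set β,
    (∀ a, ConnectedIn G (φ a)) ∧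
    (Pairwise fun a b => Disjoint (φ a) (φ b)) ∧
    (∀ a b : α, H.Adj a b → ∃ u ∈ φ a, ∃ v ∈ φ b, G.Adj u v)

/-- `H` is an induced minor of `G`: as for a minor model, but two distinct branch sets
are joined by an edge of `G` *iff* the corresponding vertices are adjacent in `H`. -/
def IsInducedMinor {α β : Type*} (H : SimpleGraph α) (G : SimpleGraph β) : Prop :=
  ∃ φ : α → Set β,
    (∀ a, ConnectedIn G (φ a)) ∧
    (Pairwise fun a b => Disjoint (φ a) (φ b)) ∧
    (∀ a b : α, a ≠ b → (H.Adj a b ↔ ∃ u ∈ φ a, ∃ v ∈ φ b, G.Adj u v))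

/-- `G` is a region intersection graph over `H`: every vertex `v` of `G` is assigned a
connected subgraph (region) `R v` of `H` such that two distinct vertices of `G` are
adjacent iff their regions intersect. -/
def IsRIG {α β : Type*} (G : SimpleGraph α) (H : SimpleGraph β) : Prop :=
  ∃ R : α → Set β,
    (∀ v, ConnectedIn H (R v)) ∧
    (∀ u v : α, u ≠ v → (G.Adj u v ↔ (R u ∩ R v).Nonempty))

/-- Identification relation used to build the internal vertices of the `ℓ`-subdivision:
the `i`-th internal vertex of the edge directed as `(u, v)` equals the `(ℓ-1-i)`-th
internal vertex of the edge directed as `(v, u)`. -/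
def SubdivRel {V : Type*} (G : SimpleGraph V) (ℓ : ℕ) :
    ({d : V × V // G.Adj d.1 d.2} × Fin ℓ) → ({d : V × V // G.Adj d.1 d.2} × Fin ℓ) → Prop :=
  fun a b => a.1.1.1 = b.1.1.2 ∧ a.1.1.2 = b.1.1.1 ∧ (a.2 : ℕ) + (b.2 : ℕ) + 1 = ℓ

/-- Vertices of the `ℓ`-subdivision of `G`: the branching (original) vertices together
with `ℓ` internal (subdivision) vertices on each edge. -/
def SubdivVert {V : Type*} (G : SimpleGraph V) (ℓ : ℕ) : Type _ :=
  V ⊕ Quot (SubdivRel G ℓ)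

/-- The `ℓ`-subdivision `G^(ℓ)` of `G`: every edge of `G` is replaced by a path with
`ℓ + 1` edges (so with `ℓ` new internal vertices). -/
def subdiv {V : Type*} (G : SimpleGraph V) (ℓ : ℕ) : SimpleGraph (SubdivVert G ℓ) :=
  SimpleGraph.fromRel (fun x y =>
    (ℓ = 0 ∧ ∃ u v : V, G.Adj u v ∧ x = Sum.inl u ∧ y = Sum.inl v) ∨
    (∃ (d : {d : V × V // G.Adj d.1 d.2}) (i : Fin ℓ),
      (i : ℕ) = 0 ∧ x = Sum.inl d.1.1 ∧ y = Sum.inr (Quot.mk _ (d, i))) ∨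
    (∃ (d : {d : V × V // G.Adj d.1 d.2}) (i j : Fin ℓ),
      (i : ℕ) + 1 = (j : ℕ) ∧ x = Sum.inr (Quot.mk _ (d, i)) ∧ y = Sum.inr (Quot.mk _ (d, j))))

open SimpleGraph

section ConnectedIn

variable {α γ : Type*} {G : SimpleGraph α}

lemma ConnectedIn.nonempty {S : Set α} (h : ConnectedIn G S) : S.Nonempty :=
  Set.nonempty_coe_sort.mp (Connected.nonempty h)

lemma ConnectedIn.reachable {S : Set α} (h : ConnectedIn G S) {u v : α} (hu : u ∈ S)
    (hv : v ∈ S) : (G.induce S).Reachable ⟨u, hu⟩ ⟨v, hv⟩ :=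
  h.preconnected _ _

lemma SimpleGraph.Reachable.induce_mono {S T : Set α} (hST : S ⊆ T) {u v : α} {hu : u ∈ S}
    {hv : v ∈ S}
    (h : (G.induce S).Reachable ⟨u, hu⟩ ⟨v, hv⟩) :
    (G.induce T).Reachable ⟨u, hST hu⟩ ⟨v, hST hv⟩ :=
  h.map (induceHomOfLE G hST).toHom

lemma ConnectedIn.union_iUnion {ι : Sort*} {A : Set α} {C : ι → Set α}
    (hA : ConnectedIn G A) (hC : ∀ i, ConnectedIn G (A ∪ C i)) :
    ConnectedIn G (A ∪ ⋃ i, C i) := by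
  obtain ⟨u, hu⟩ := hA.nonempty
  refine induce_connected_of_patches u (Or.inl hu) fun {v} hv => ?_
  rcases hv with hv | hv
  · exact ⟨A, Set.subset_union_left, hu, hv, hA.reachable hu hv⟩
  · obtain ⟨i, hvi⟩ := Set.mem_iUnion.mp hv
    exact ⟨A ∪ C i, Set.union_subset_union_right _ (Set.subset_iUnion _ i),
      Or.inl hu, Or.inr hvi, (hC i).reachable (Or.inl hu) (Or.inr hvi)⟩

section biUnion

variable {X : SimpleGraph γ} {S : Set γ} {R : γ → Set α}

lemma SimpleGraph.Walk.reachable_induce_biUnion (hR : ∀ x ∈ S, ConnectedIn G (R x))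
    (hmeet : ∀ x ∈ S, ∀ y ∈ S, X.Adj x y → (R x ∩ R y).Nonempty)
    {x y : S} (w : (X.induce S).Walk x y) {u v : α} (hu : u ∈ R x) (hv : v ∈ R y) :
    (G.induce (⋃ z ∈ S, R z)).Reachable
      ⟨u, Set.mem_biUnion x.2 hu⟩ ⟨v, Set.mem_biUnion y.2 hv⟩ := by
  induction w generalizing u with
  | @nil z => exact ((hR _ z.2).reachable hu hv).induce_mono (Set.subset_biUnion_of_mem z.2)
  | @cons x z y hxz w ih =>
    obtain ⟨p, hpx, hpz⟩ := hmeet x.1 x.2 z.1 z.2 hxz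
    exact (((hR _ x.2).reachable hu hpx).induce_mono (Set.subset_biUnion_of_mem x.2)).trans
      (ih hpz hv)

lemma ConnectedIn.biUnion (hS : ConnectedIn X S) (hR : ∀ x ∈ S, ConnectedIn G (R x))
    (hmeet : ∀ x ∈ S, ∀ y ∈ S, X.Adj x y → (R x ∩ R y).Nonempty) :
    ConnectedIn G (⋃ x ∈ S, R x) := by
  obtain ⟨x₀, hx₀⟩ := hS.nonempty
  obtain ⟨u₀, hu₀⟩ := (hR x₀ hx₀).nonempty
  rw [ConnectedIn, connected_iff_exists_forall_reachable]
  refine ⟨⟨u₀, Set.mem_biUnion hx₀ hu₀⟩, fun ⟨v, hv⟩ => ?_⟩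
  obtain ⟨y, hy, hvy⟩ := Set.mem_iUnion₂.mp hv
  obtain ⟨w⟩ := hS.reachable hx₀ hy
  exact w.reachable_induce_biUnion hR hmeet hu₀ hvy

end biUnion

section Extension

variable {A B S : Set α}

lemma ConnectedIn.exists_extension_adj_of_walk (hA : ConnectedIn G A) (hAB : Disjoint A B)
    {x y : S} (w : (G.induce S).Walk x y) (hx : x.1 ∈ A) (hy : y.1 ∈ B) :
    ∃ T ⊆ S, Disjoint T B ∧ ConnectedIn G (A ∪ T) ∧ ∃ u ∈ A ∪ T, ∃ v ∈ B, G.Adj u v := by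
  induction w generalizing A with
  | nil => exact absurd hy (Set.disjoint_left.mp hAB hx)
  | @cons x z y hxz w ih =>
    by_cases hz : z.1 ∈ B
    · exact ⟨∅, Set.empty_subset _, Set.empty_disjoint _, by rwa [Set.union_empty],
        x, Or.inl hx, z, hz, hxz⟩
    have hAz : ConnectedIn G (A ∪ {z.1}) :=
      connected_induce_union hA.preconnected Preconnected.of_subsingleton hx rfl hxz
    obtain ⟨T, hTS, hTB, hAT, hadj⟩ :=
      ih hAz (Set.disjoint_union_left.mpr ⟨hAB, Set.disjoint_singleton_left.mpr hz⟩)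
        (Or.inr rfl) hy
    rw [Set.union_assoc, Set.singleton_union] at hAT hadj
    exact ⟨insert z.1 T, Set.insert_subset z.2 hTS,
      Set.disjoint_insert_left.mpr ⟨hz, hTB⟩, hAT, hadj⟩

lemma ConnectedIn.exists_extension_adj (hA : ConnectedIn G A) (hS : ConnectedIn G S)
    (hAB : Disjoint A B) (hSA : (S ∩ A).Nonempty) (hSB : (S ∩ B).Nonempty) :
    ∃ T ⊆ S, Disjoint T B ∧ ConnectedIn G (A ∪ T) ∧ ∃ u ∈ A ∪ T, ∃ v ∈ B, G.Adj u v := by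
  obtain ⟨p, hpS, hpA⟩ := hSA
  obtain ⟨q, hqS, hqB⟩ := hSB
  obtain ⟨w⟩ := hS.reachable hpS hqS
  exact hA.exists_extension_adj_of_walk hAB w hpA hqB

end Extension

end ConnectedIn

theorem IsRIG.of_isInducedMinor {α β γ : Type*} {G : SimpleGraph α} {X : SimpleGraph γ}
    {F : SimpleGraph β} (hX : IsRIG X G) (hF : IsInducedMinor F X) : IsRIG F G := by
  obtain ⟨φ, hφc, hφd, hφa⟩ := hF
  obtain ⟨R, hRc, hRa⟩ := hX
  refine ⟨fun w => ⋃ x ∈ φ w, R x,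
    fun w => (hφc w).biUnion (fun x _ => hRc x) fun x _ y _ hxy => (hRa x y hxy.ne).mp hxy,
    fun w w' hne => ⟨fun hadj => ?_, fun ⟨a, ha, ha'⟩ => ?_⟩⟩
  · obtain ⟨x, hx, y, hy, hxy⟩ := (hφa w w' hne).mp hadj
    obtain ⟨a, hax, hay⟩ := (hRa x y hxy.ne).mp hxy
    exact ⟨a, Set.mem_biUnion hx hax, Set.mem_biUnion hy hay⟩
  · obtain ⟨x, hx, hax⟩ := Set.mem_iUnion₂.mp ha
    obtain ⟨y, hy, hay⟩ := Set.mem_iUnion₂.mp ha'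
    have hxy : x ≠ y := fun h => Set.disjoint_left.mp (hφd hne) hx (h ▸ hy)
    exact (hφa w w' hne).mpr ⟨x, hx, y, hy, (hRa x y hxy).mpr ⟨a, hax, hay⟩⟩

/-- The branch set of `c` is `A c` together with the extensions `T m` of the edges `m`
oriented out of `c`. -/
theorem isMinor_of_branchSets_extension {α β ι : Type*} {G : SimpleGraph α}
    {H : SimpleGraph β} (A : β → Set α) (T : ι → Set α) (src tgt : ι → β)
    (hA : ∀ c, ConnectedIn G (A c)) (hAT : ∀ m, ConnectedIn G (A (src m) ∪ T m))
    (hAdisj : Pairwise fun c c' => Disjoint (A c) (A c'))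
    (hTdisj : Pairwise fun m m' => Disjoint (T m) (T m'))
    (hATdisj : ∀ c m, c ≠ src m → Disjoint (A c) (T m))
    (hadj : ∀ m, ∃ u ∈ A (src m) ∪ T m, ∃ v ∈ A (tgt m), G.Adj u v)
    (hH : ∀ a b, H.Adj a b → ∃ m, s(src m, tgt m) = s(a, b)) : IsMinor H G := by
  let φ : β → Set α := fun c => A c ∪ ⋃ m : {m // src m = c}, T m
  have hφadj : ∀ m, ∃ u ∈ φ (src m), ∃ v ∈ φ (tgt m), G.Adj u v := fun m => by
    obtain ⟨u, hu, v, hv, huv⟩ := hadj m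
    refine ⟨u, Set.union_subset_union_right _ ?_ hu, v, Or.inl hv, huv⟩
    exact Set.subset_iUnion (fun m' : {m' // src m' = src m} => T m') ⟨m, rfl⟩
  refine ⟨φ, fun c => (hA c).union_iUnion fun ⟨m, hm⟩ => hm ▸ hAT m,
    fun c c' hne => ?_, fun a b hab => ?_⟩
  · simp only [φ, Set.disjoint_union_left, Set.disjoint_union_right, Set.disjoint_iUnion_left,
      Set.disjoint_iUnion_right]
    refine ⟨⟨hAdisj hne, ?_⟩, ?_⟩
    · rintro ⟨m, rfl⟩
      exact (hATdisj _ m hne.symm).symm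
    · rintro ⟨m, rfl⟩
      refine ⟨hATdisj _ m hne, ?_⟩
      rintro ⟨m', rfl⟩
      exact hTdisj fun h => hne (congrArg src h)
  · obtain ⟨m, hm⟩ := hH a b hab
    obtain ⟨u, hu, v, hv, huv⟩ := hφadj m
    rcases Sym2.eq_iff.mp hm with ⟨rfl, rfl⟩ | ⟨rfl, rfl⟩
    · exact ⟨u, hu, v, hv, huv⟩
    · exact ⟨v, hv, u, hu, huv.symm⟩

section SubdivisionOne

variable {β : Type*} {H : SimpleGraph β}

variable (H) in
def subdivEdge : Quot (SubdivRel H 1) → Sym2 β :=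
  Quot.lift (fun p => s(p.1.1.1, p.1.1.2)) (by
    rintro ⟨⟨⟨a, b⟩, hab⟩, i⟩ ⟨⟨⟨c, e⟩, hce⟩, j⟩ ⟨h1, h2, -⟩
    simp only at h1 h2 ⊢
    subst h1 h2
    exact Sym2.eq_swap)

lemma subdivEdge_eq_out (m : Quot (SubdivRel H 1)) :
    subdivEdge H m = s(m.out.1.1.1, m.out.1.1.2) := by
  conv_lhs => rw [← Quot.out_eq m]
  rfl

lemma exists_subdivEdge_eq {a b : β} (hab : H.Adj a b) : ∃ m, subdivEdge H m = s(a, b) :=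
  ⟨Quot.mk _ (⟨(a, b), hab⟩, 0), rfl⟩

lemma subdiv_one_not_adj_inl_inl (a b : β) : ¬ (subdiv H 1).Adj (Sum.inl a) (Sum.inl b) := by
  rintro ⟨-, (⟨h0, -⟩ | ⟨d, i, -, -, hy⟩ | ⟨d, i, j, -, hx, -⟩) |
           (⟨h0, -⟩ | ⟨d, i, -, -, hy⟩ | ⟨d, i, j, -, hx, -⟩)⟩ <;>
    first | exact one_ne_zero h0 | exact nomatch hy | exact nomatch hx

lemma subdiv_one_not_adj_inr_inr (m m' : Quot (SubdivRel H 1)) :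
    ¬ (subdiv H 1).Adj (Sum.inr m) (Sum.inr m') := by
  rintro ⟨-, (⟨h0, -⟩ | ⟨d, i, -, hx, -⟩ | ⟨d, i, j, hij, -, -⟩) |
           (⟨h0, -⟩ | ⟨d, i, -, hx, -⟩ | ⟨d, i, j, hij, -, -⟩)⟩ <;>
    first
    | exact one_ne_zero h0
    | exact nomatch hx
    | exact absurd hij (by omega)

lemma subdiv_one_adj_inl_mk (d : {d : β × β // H.Adj d.1 d.2}) (i : Fin 1) :
    (subdiv H 1).Adj (Sum.inl d.1.1) (Sum.inr (Quot.mk _ (d, i))) :=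
  ⟨Sum.inl_ne_inr, Or.inl (Or.inr (Or.inl ⟨d, i, Fin.val_eq_zero i, rfl, rfl⟩))⟩

lemma subdiv_one_adj_inl_inr_iff {c : β} {m : Quot (SubdivRel H 1)} :
    (subdiv H 1).Adj (Sum.inl c) (Sum.inr m) ↔ c ∈ subdivEdge H m := by
  constructor
  · rintro ⟨-, (⟨h0, -⟩ | ⟨d, i, -, hx, hy⟩ | ⟨d, i, j, -, hx, -⟩) |
             (⟨h0, -⟩ | ⟨d, i, -, hx, -⟩ | ⟨d, i, j, -, -, hy⟩)⟩
    · exact absurd h0 one_ne_zero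
    · cases hx; cases hy
      exact Sym2.mem_mk_left _ _
    all_goals first | exact absurd h0 one_ne_zero | exact nomatch hx | exact nomatch hy
  · induction m using Quot.ind with
    | mk p =>
      obtain ⟨⟨⟨a, b⟩, hab⟩, i⟩ := p
      intro hc
      rcases Sym2.mem_iff.mp hc with rfl | rfl
      · exact subdiv_one_adj_inl_mk ⟨(c, b), hab⟩ i
      · have hswap : Quot.mk (SubdivRel H 1) (⟨(a, c), hab⟩, i) =
            Quot.mk _ (⟨(c, a), hab.symm⟩, i) := Quot.sound ⟨rfl, rfl, by omega⟩
        rw [hswap]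
        exact subdiv_one_adj_inl_mk ⟨(c, a), hab.symm⟩ i

end SubdivisionOne

theorem IsRIG.isMinor_of_subdiv_one {α β : Type*} {G : SimpleGraph α} {H : SimpleGraph β}
    (h : IsRIG (subdiv H 1) G) : IsMinor H G := by
  obtain ⟨R, hRc, hRa⟩ := h
  have hdisj : ∀ w w', w ≠ w' → ¬ (subdiv H 1).Adj w w' → Disjoint (R w) (R w') :=
    fun w w' hne hn => Set.disjoint_iff_inter_eq_empty.mpr
      (Set.not_nonempty_iff_eq_empty.mp (mt (hRa w w' hne).mpr hn))
  have hmeet : ∀ c m, c ∈ subdivEdge H m → (R (Sum.inr m) ∩ R (Sum.inl c)).Nonempty :=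
    fun c m hc => Set.inter_comm (R _) _ ▸
      (hRa _ _ Sum.inl_ne_inr).mp (subdiv_one_adj_inl_inr_iff.mpr hc)
  -- Orient each edge of `H` by the representative chosen for its subdivision vertex.
  let src : Quot (SubdivRel H 1) → β := fun m => m.out.1.1.1
  let tgt : Quot (SubdivRel H 1) → β := fun m => m.out.1.1.2
  have hedge : ∀ m, subdivEdge H m = s(src m, tgt m) := subdivEdge_eq_out
  have hext : ∀ m, ∃ T ⊆ R (Sum.inr m), Disjoint T (R (Sum.inl (tgt m))) ∧
      ConnectedIn G (R (Sum.inl (src m)) ∪ T) ∧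
      ∃ u ∈ R (Sum.inl (src m)) ∪ T, ∃ v ∈ R (Sum.inl (tgt m)), G.Adj u v := fun m =>
    (hRc _).exists_extension_adj (hRc _)
      (hdisj _ _ (Sum.inl_injective.ne m.out.1.2.ne) (subdiv_one_not_adj_inl_inl _ _))
      (hmeet _ _ (by rw [hedge]; exact Sym2.mem_mk_left _ _))
      (hmeet _ _ (by rw [hedge]; exact Sym2.mem_mk_right _ _))
  choose T hTR hTtgt hTconn hTadj using hext
  refine isMinor_of_branchSets_extension (fun c => R (Sum.inl c)) T src tgt (fun c => hRc _)
    hTconn (fun c c' hne => hdisj _ _ (Sum.inl_injective.ne hne) (subdiv_one_not_adj_inl_inl _ _))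
    (fun m m' hne => (hdisj _ _ (Sum.inr_injective.ne hne)
      (subdiv_one_not_adj_inr_inr _ _)).mono (hTR m) (hTR m'))
    (fun c m hc => ?_) hTadj fun a b hab => ?_
  · by_cases hct : c = tgt m
    · exact hct ▸ (hTtgt m).symm
    refine (hdisj _ _ Sum.inl_ne_inr fun hadj => ?_).mono_right (hTR m)
    rw [subdiv_one_adj_inl_inr_iff, hedge, Sym2.mem_iff] at hadj
    exact hadj.elim hc hct
  · obtain ⟨m, hm⟩ := exists_subdivEdge_eq hab
    exact ⟨m, (hedge m).symm.trans hm⟩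

/-- If `H` is not a minor of `G`, then any graph containing the 1-subdivision `H^(1)`
of `H` as an induced minor is not a region intersection graph over `G`. -/
theorem statement2 {α β : Type*} (G : SimpleGraph α) (H : SimpleGraph β)
    (hHG : ¬ IsMinor H G) :
    ∀ {γ : Type*} (X : SimpleGraph γ),
      IsInducedMinor (subdiv H 1) X → ¬ IsRIG X G := by
  intro γ X hIM hRIG
  exact hHG (hRIG.of_isInducedMinor hIM).isMinor_of_subdiv_one
end

section
/- For every positive integer n, the graph G_n has girth at least 5. -/
/-- Adjacency in the `n × n` grid graph. -/
def GridAdj (n : ℕ) : (Fin n × Fin n) → (Fin n × Fin n) → Prop := fun p q =>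
  (p.1 = q.1 ∧ (p.2 : ℕ) + 1 = (q.2 : ℕ)) ∨ ((p.1 : ℕ) + 1 = (q.1 : ℕ) ∧ p.2 = q.2)

/-- The apex `n × n` grid `A_n`: the `n × n` grid together with one extra vertex
adjacent to all grid vertices. -/
def apexGrid (n : ℕ) : SimpleGraph ((Fin n × Fin n) ⊕ Unit) :=
  SimpleGraph.fromRel (fun x y =>
    (∃ p q : Fin n × Fin n, x = Sum.inl p ∧ y = Sum.inl q ∧ GridAdj n p q) ∨
    (∃ p : Fin n × Fin n, x = Sum.inl p ∧ y = Sum.inr ()))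

/-- The disjoint union of `n` copies of the graph `G`. -/
def nCopies {V : Type*} (n : ℕ) (G : SimpleGraph V) : SimpleGraph (Fin n × V) :=
  SimpleGraph.fromRel (fun x y => x.1 = y.1 ∧ G.Adj x.2 y.2)

/-- `attachPaths B n m g e`: the graph obtained from `B` (whose `m` vertices are
enumerated as `b_1, …, b_m` by the equivalence `e`) by adding `n` new pairwise disjoint
paths `P_1, …, P_n`, each with `g * m` vertices, all disjoint from `B`, and joining, for
every `i ∈ {1, …, m}` and `j ∈ {1, …, n}`, the `(g*i − 1)`-st vertex of `P_j` to `b_i`.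
(The `k`-th vertex of `P_j`, 1-based, is `Sum.inr (j, k-1)`; the vertex `b_i` is
`Sum.inl (e (i-1))`; the joining condition reads `(k - 1) + 2 = g * i`.) -/
def attachPaths {β : Type*} (B : SimpleGraph β) (n m g : ℕ) (e : Fin m ≃ β) :
    SimpleGraph (β ⊕ (Fin n × Fin (g * m))) :=
  SimpleGraph.fromRel (fun x y =>
    (∃ u v : β, x = Sum.inl u ∧ y = Sum.inl v ∧ B.Adj u v) ∨
    (∃ (j : Fin n) (k l : Fin (g * m)),
      x = Sum.inr (j, k) ∧ y = Sum.inr (j, l) ∧ (k : ℕ) + 1 = (l : ℕ)) ∨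
    (∃ (j : Fin n) (i : Fin m) (k : Fin (g * m)),
      (k : ℕ) + 2 = g * ((i : ℕ) + 1) ∧ x = Sum.inr (j, k) ∧ y = Sum.inl (e i)))

/-- The enumeration `e` of the vertices of a disjoint union of copies lists the vertices
of each copy consecutively: the indices enumerating any given copy form an interval. -/
def EnumConsecutive {V : Type*} (n m : ℕ) (e : Fin m ≃ Fin n × V) : Prop :=
  ∀ i j k : Fin m, i ≤ j → j ≤ k → (e i).1 = (e k).1 → (e j).1 = (e i).1

/-- `B_n`: the disjoint union of `n` copies of the 1-subdivision of the apex
`n × n` grid `A_n`. -/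
def Bn (n : ℕ) : SimpleGraph (Fin n × SubdivVert (apexGrid n) 1) :=
  nCopies n (subdiv (apexGrid n) 1)

section Subdiv
variable {W : Type*} {H : SimpleGraph W}

lemma subdiv1_adj {x y : SubdivVert H 1} (h : (subdiv H 1).Adj x y) :
    ∃ (d : {d : W × W // H.Adj d.1 d.2}),
      (x = Sum.inl d.1.1 ∧ y = Sum.inr (Quot.mk _ (d, (0 : Fin 1)))) ∨
      (y = Sum.inl d.1.1 ∧ x = Sum.inr (Quot.mk _ (d, (0 : Fin 1)))) := by
  rw [subdiv, SimpleGraph.fromRel_adj] at h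
  obtain ⟨-, h | h⟩ := h <;>
      rcases h with ⟨h0, -⟩ | ⟨d, i, hi, hx, hy⟩ | ⟨d, i, j, hij, -, -⟩
  · omega
  · obtain rfl : i = (0 : Fin 1) := Subsingleton.elim _ _
    exact ⟨d, Or.inl ⟨hx, hy⟩⟩
  · have := i.2; have := j.2; omega
  · omega
  · obtain rfl : i = (0 : Fin 1) := Subsingleton.elim _ _
    exact ⟨d, Or.inr ⟨hx, hy⟩⟩
  · have := i.2; have := j.2; omega

lemma subdiv1_flip {x y : SubdivVert H 1} (h : (subdiv H 1).Adj x y) :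
    x.isLeft = !y.isLeft := by
  obtain ⟨d, ⟨rfl, rfl⟩ | ⟨rfl, rfl⟩⟩ := subdiv1_adj h <;> rfl

lemma subdiv1_lr {u : W} {t : Quot (SubdivRel H 1)}
    (h : (subdiv H 1).Adj (Sum.inl u) (Sum.inr t)) :
    ∃ (d : {d : W × W // H.Adj d.1 d.2}), u = d.1.1 ∧ t = Quot.mk _ (d, (0 : Fin 1)) := by
  obtain ⟨d, ⟨hx, hy⟩ | ⟨hx, hy⟩⟩ := subdiv1_adj h
  · exact ⟨d, Sum.inl.inj hx, Sum.inr.inj hy⟩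
  · exact absurd hy (by simp)

lemma subdiv1_quot_eq {d d' : {d : W × W // H.Adj d.1 d.2}}
    (h : Quot.mk (SubdivRel H 1) (d, (0 : Fin 1)) = Quot.mk _ (d', (0 : Fin 1))) :
    d = d' ∨ (d.1.1 = d'.1.2 ∧ d.1.2 = d'.1.1) := by
  have key : ∀ a b : {d : W × W // H.Adj d.1 d.2} × Fin 1,
      Relation.EqvGen (SubdivRel H 1) a b → a = b ∨ SubdivRel H 1 a b := by
    intro a b hab
    induction hab with
    | rel _ _ h => exact Or.inr h
    | refl => exact Or.inl rfl
    | symm a b _ ih =>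
      rcases ih with rfl | ⟨h1, h2, h3⟩
      · exact Or.inl rfl
      · exact Or.inr ⟨h2.symm, h1.symm, by omega⟩
    | trans a b c _ _ ih1 ih2 =>
      rcases ih1 with rfl | ⟨h1, h2, h3⟩
      · exact ih2
      · rcases ih2 with rfl | ⟨h1', h2', h3'⟩
        · exact Or.inr ⟨h1, h2, h3⟩
        · refine Or.inl ?_
          have : a.1 = c.1 := Subtype.ext (Prod.ext (h1.trans h2') (h2.trans h1'))
          exact Prod.ext this (Subsingleton.elim _ _)
  rcases key (d, (0 : Fin 1)) (d', (0 : Fin 1)) (Quot.eqvGen_exact h) with heq | ⟨h1, h2, -⟩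
  · exact Or.inl (congrArg Prod.fst heq)
  · exact Or.inr ⟨h1, h2⟩

lemma subdiv1_core {u₁ u₂ : W} {t₁ t₂ : Quot (SubdivRel H 1)}
    (h1 : (subdiv H 1).Adj (Sum.inl u₁) (Sum.inr t₁))
    (h2 : (subdiv H 1).Adj (Sum.inl u₂) (Sum.inr t₁))
    (h3 : (subdiv H 1).Adj (Sum.inl u₁) (Sum.inr t₂))
    (h4 : (subdiv H 1).Adj (Sum.inl u₂) (Sum.inr t₂))
    (hu : u₁ ≠ u₂) : t₁ = t₂ := by
  obtain ⟨a, rfl, rfl⟩ := subdiv1_lr h1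
  obtain ⟨b, rfl, hbt⟩ := subdiv1_lr h2
  obtain ⟨c, hc, rfl⟩ := subdiv1_lr h3
  obtain ⟨f, hf, hft⟩ := subdiv1_lr h4
  rcases subdiv1_quot_eq hbt with rfl | ⟨hab1, hab2⟩
  · exact absurd rfl hu
  rcases subdiv1_quot_eq hft with rfl | ⟨hcf1, hcf2⟩
  · exact absurd (hc.trans hf.symm) hu
  have hca : c = a := Subtype.ext (Prod.ext hc.symm (hcf2.trans (hf.symm.trans hab2.symm)))
  rw [hca]

lemma subdiv1_noC4 {z1 z2 z3 z4 : SubdivVert H 1}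
    (h12 : (subdiv H 1).Adj z1 z2) (h23 : (subdiv H 1).Adj z2 z3)
    (h34 : (subdiv H 1).Adj z3 z4) (h41 : (subdiv H 1).Adj z4 z1)
    (h13 : z1 ≠ z3) (h24 : z2 ≠ z4) : False := by
  rcases z1 with u1 | t1 <;> rcases z2 with u2 | t2 <;>
    rcases z3 with u3 | t3 <;> rcases z4 with u4 | t4 <;>
    first
      | (have := subdiv1_flip h12; simp at this; done)
      | (have := subdiv1_flip h23; simp at this; done)
      | (have := subdiv1_flip h34; simp at this; done)
      | (have := subdiv1_flip h41; simp at this; done)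
      | (exact h24 (congrArg Sum.inr
          (subdiv1_core h12 h23.symm h41.symm h34 (fun h => h13 (congrArg Sum.inl h)))))
      | (exact h13 (congrArg Sum.inr
          (subdiv1_core h23 h34.symm h12.symm h41 (fun h => h24 (congrArg Sum.inl h))).symm))


lemma subdiv1_noTri {z1 z2 z3 : SubdivVert H 1}
    (h12 : (subdiv H 1).Adj z1 z2) (h23 : (subdiv H 1).Adj z2 z3)
    (h31 : (subdiv H 1).Adj z3 z1) : False := by
  have f1 := subdiv1_flip h12
  have f2 := subdiv1_flip h23
  have f3 := subdiv1_flip h31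
  rcases z1.isLeft <;> rcases z2.isLeft <;> simp_all

end Subdiv

section Attach
variable {n m : ℕ} {β : Type*} {B : SimpleGraph β} {e : Fin m ≃ β}

lemma bn_adj {n : ℕ} {x y : Fin n × SubdivVert (apexGrid n) 1} (h : (Bn n).Adj x y) :
    x.1 = y.1 ∧ (subdiv (apexGrid n) 1).Adj x.2 y.2 := by
  rw [Bn, nCopies, SimpleGraph.fromRel_adj] at h
  obtain ⟨-, ⟨h1, h2⟩ | ⟨h1, h2⟩⟩ := h
  · exact ⟨h1, h2⟩
  · exact ⟨h1.symm, h2.symm⟩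

lemma attach_rr {j j' : Fin n} {k l : Fin (2 * m)}
    (h : (attachPaths B n m 2 e).Adj (Sum.inr (j, k)) (Sum.inr (j', l))) :
    j = j' ∧ ((k : ℕ) + 1 = l ∨ (l : ℕ) + 1 = k) := by
  rw [attachPaths, SimpleGraph.fromRel_adj] at h
  obtain ⟨-, h | h⟩ := h <;>
    rcases h with ⟨u, v, h1, h2, -⟩ | ⟨j0, k0, l0, h1, h2, h3⟩ | ⟨j0, i0, k0, -, h1, h2⟩ <;>
    simp_all <;> omega

lemma attach_lr {b : β} {j : Fin n} {k : Fin (2 * m)}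
    (h : (attachPaths B n m 2 e).Adj (Sum.inl b) (Sum.inr (j, k))) :
    ∃ i : Fin m, b = e i ∧ (k : ℕ) = 2 * (i : ℕ) := by
  rw [attachPaths, SimpleGraph.fromRel_adj] at h
  obtain ⟨-, h | h⟩ := h <;>
    rcases h with ⟨u, v, h1, h2, -⟩ | ⟨j0, k0, l0, h1, h2, h3⟩ | ⟨j0, i0, k0, hk, h1, h2⟩ <;>
    simp_all
  omega

lemma attach_ll {b b' : β}
    (h : (attachPaths B n m 2 e).Adj (Sum.inl b) (Sum.inl b')) : B.Adj b b' := by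
  rw [attachPaths, SimpleGraph.fromRel_adj] at h
  obtain ⟨-, h | h⟩ := h <;>
    rcases h with ⟨u, v, h1, h2, h3⟩ | ⟨j0, k0, l0, h1, h2, h3⟩ | ⟨j0, i0, k0, hk, h1, h2⟩ <;>
    simp_all
  exact h3.symm

lemma attach_two_L {b b' : β} {p : Fin n × Fin (2 * m)}
    (h : (attachPaths B n m 2 e).Adj (Sum.inl b) (Sum.inr p))
    (h' : (attachPaths B n m 2 e).Adj (Sum.inl b') (Sum.inr p)) : b = b' := by
  obtain ⟨j, k⟩ := p
  obtain ⟨i, rfl, hk⟩ := attach_lr h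
  obtain ⟨i', rfl, hk'⟩ := attach_lr h'
  have : i = i' := Fin.ext (by omega)
  rw [this]

lemma attach_two_R {b : β} {j j' : Fin n} {k k' : Fin (2 * m)}
    (h : (attachPaths B n m 2 e).Adj (Sum.inl b) (Sum.inr (j, k)))
    (h' : (attachPaths B n m 2 e).Adj (Sum.inl b) (Sum.inr (j', k'))) : (k : ℕ) = k' := by
  obtain ⟨i, rfl, hk⟩ := attach_lr h
  obtain ⟨i', hi, hk'⟩ := attach_lr h'
  have : i = i' := e.injective hi
  subst this
  omega

lemma attach_even {b : β} {j : Fin n} {k : Fin (2 * m)}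
    (h : (attachPaths B n m 2 e).Adj (Sum.inl b) (Sum.inr (j, k))) : (k : ℕ) % 2 = 0 := by
  obtain ⟨i, -, hk⟩ := attach_lr h
  omega

end Attach



section Main
variable {n m : ℕ} {e : Fin m ≃ Fin n × SubdivVert (apexGrid n) 1}

lemma attach_noTri (a b c : (Fin n × SubdivVert (apexGrid n) 1) ⊕ (Fin n × Fin (2 * m)))
    (hab : (attachPaths (Bn n) n m 2 e).Adj a b)
    (hbc : (attachPaths (Bn n) n m 2 e).Adj b c)
    (hca : (attachPaths (Bn n) n m 2 e).Adj c a) : False := by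
  rcases a with b1 | ⟨j1, k1⟩ <;> rcases b with b2 | ⟨j2, k2⟩ <;> rcases c with b3 | ⟨j3, k3⟩
  · exact subdiv1_noTri (bn_adj (attach_ll hab)).2 (bn_adj (attach_ll hbc)).2
      (bn_adj (attach_ll hca)).2
  · exact hab.ne (congrArg Sum.inl (attach_two_L hbc hca.symm).symm)
  · exact hca.ne (congrArg Sum.inl (attach_two_L hab hbc.symm).symm)
  · have e1 := attach_even hab
    have e2 := attach_even hca.symm
    have r1 := attach_rr hbc
    omega
  · exact hbc.ne (congrArg Sum.inl (attach_two_L hca hab.symm).symm)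
  · have hk := attach_two_R hab.symm hbc
    have r1 := attach_rr hca
    omega
  · have e1 := attach_even hbc.symm
    have e2 := attach_even hca
    have r1 := attach_rr hab
    omega
  · have r1 := attach_rr hab
    have r2 := attach_rr hbc
    have r3 := attach_rr hca
    omega

lemma attach_noC4 (a b c d : (Fin n × SubdivVert (apexGrid n) 1) ⊕ (Fin n × Fin (2 * m)))
    (hab : (attachPaths (Bn n) n m 2 e).Adj a b)
    (hbc : (attachPaths (Bn n) n m 2 e).Adj b c)
    (hcd : (attachPaths (Bn n) n m 2 e).Adj c d)
    (hda : (attachPaths (Bn n) n m 2 e).Adj d a)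
    (hac : a ≠ c) (hbd : b ≠ d) : False := by
  rcases a with b1 | ⟨j1, k1⟩ <;> rcases b with b2 | ⟨j2, k2⟩ <;>
    rcases c with b3 | ⟨j3, k3⟩ <;> rcases d with b4 | ⟨j4, k4⟩
  -- LLLL
  · have e1 := bn_adj (attach_ll hab)
    have e2 := bn_adj (attach_ll hbc)
    have e3 := bn_adj (attach_ll hcd)
    have e4 := bn_adj (attach_ll hda)
    refine subdiv1_noC4 e1.2 e2.2 e3.2 e4.2 ?_ ?_
    · exact fun h => hac (congrArg Sum.inl (Prod.ext (e1.1.trans e2.1) h))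
    · exact fun h => hbd (congrArg Sum.inl (Prod.ext (e2.1.trans e3.1) h))
  -- LLLR
  · exact hac (congrArg Sum.inl (attach_two_L hcd hda.symm).symm)
  -- LLRL
  · exact hbd (congrArg Sum.inl (attach_two_L hbc hcd.symm))
  -- LLRR
  · have e1 := attach_even hbc
    have e2 := attach_even hda.symm
    have r1 := attach_rr hcd
    omega
  -- LRLL
  · exact hac (congrArg Sum.inl (attach_two_L hab hbc.symm))
  -- LRLR
  · exact hac (congrArg Sum.inl (attach_two_L hab hbc.symm))
  -- LRRL
  · have e1 := attach_even hab
    have e2 := attach_even hcd.symm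
    have r1 := attach_rr hbc
    omega
  -- LRRR
  · have hk := attach_two_R hab hda.symm
    have r1 := attach_rr hbc
    have r2 := attach_rr hcd
    exact hbd (congrArg Sum.inr (Prod.ext (r1.1.trans r2.1) (Fin.ext hk)))
  -- RLLL
  · exact hbd (congrArg Sum.inl (attach_two_L hab.symm hda))
  -- RLLR
  · have e1 := attach_even hab.symm
    have e2 := attach_even hcd
    have r1 := attach_rr hda
    omega
  -- RLRL
  · exact hbd (congrArg Sum.inl (attach_two_L hab.symm hda))
  -- RLRR
  · have hk := attach_two_R hab.symm hbc
    have r1 := attach_rr hcd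
    have r2 := attach_rr hda
    exact hac (congrArg Sum.inr (Prod.ext (r1.1.trans r2.1).symm (Fin.ext hk)))
  -- RRLL
  · have e1 := attach_even hbc.symm
    have e2 := attach_even hda
    have r1 := attach_rr hab
    omega
  -- RRLR
  · have hk := attach_two_R hbc.symm hcd
    have r1 := attach_rr hda
    have r2 := attach_rr hab
    exact hbd (congrArg Sum.inr (Prod.ext (r1.1.trans r2.1).symm (Fin.ext hk)))
  -- RRRL
  · have hk := attach_two_R hcd.symm hda
    have r1 := attach_rr hab
    have r2 := attach_rr hbc
    exact hac (congrArg Sum.inr (Prod.ext (r1.1.trans r2.1) (Fin.ext hk).symm))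
  -- RRRR
  · have r1 := attach_rr hab
    have r2 := attach_rr hbc
    have r3 := attach_rr hcd
    have r4 := attach_rr hda
    have hk13 : (k1 : ℕ) ≠ (k3 : ℕ) := fun h =>
      hac (congrArg Sum.inr (Prod.ext (r1.1.trans r2.1) (Fin.ext h)))
    have hk24 : (k2 : ℕ) ≠ (k4 : ℕ) := fun h =>
      hbd (congrArg Sum.inr (Prod.ext (r2.1.trans r3.1) (Fin.ext h)))
    omega

end Main

lemma girth_ge_five {V : Type*} (G : SimpleGraph V)
    (hT : ∀ a b c : V, G.Adj a b → G.Adj b c → G.Adj c a → False)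
    (hQ : ∀ a b c d : V, G.Adj a b → G.Adj b c → G.Adj c d → G.Adj d a →
      a ≠ c → b ≠ d → False) :
    (5 : ℕ∞) ≤ G.egirth := by
  rw [SimpleGraph.le_egirth]
  intro a w hw
  by_contra hlt
  push_neg at hlt
  have h3l := hw.three_le_length
  have hlen : w.length = 3 ∨ w.length = 4 := by
    have h5 : (w.length : ℕ∞) < 5 := hlt
    have : w.length < 5 := by exact_mod_cast h5
    omega
  clear hlt
  cases w with
  | nil => simp at hlen
  | cons h1 p1 =>
    cases p1 with
    | nil => simp at hlen
    | cons h2 p2 =>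
      cases p2 with
      | nil =>
        simp only [SimpleGraph.Walk.length_cons, SimpleGraph.Walk.length_nil] at hlen
        omega
      | cons h3 p3 =>
        cases p3 with
        | nil => exact hT _ _ _ h1 h2 h3
        | cons h4 p4 =>
          cases p4 with
          | nil =>
            have hnd := hw.support_nodup
            simp only [SimpleGraph.Walk.support_cons, SimpleGraph.Walk.support_nil,
              List.tail_cons, List.nodup_cons, List.mem_cons, List.mem_singleton,
              List.not_mem_nil, or_false, List.nodup_nil, and_true] at hnd
            refine hQ _ _ _ _ h1 h2 h3 h4 ?_ ?_
            · rintro rfl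
              tauto
            · rintro rfl
              tauto
          | cons h5 p5 =>
            simp only [SimpleGraph.Walk.length_cons] at hlen
            omega


/-- For every positive integer `n`, the graph `G_n` — obtained from `B_n` (the disjoint
union of `n` copies of `A_n^(1)`, with its `m` vertices enumerated so that the vertices
of each copy are consecutive) by attaching `n` disjoint paths with `2m` vertices,
joining the `(2i-1)`-st vertex of each path to `b_i` — has girth at least 5. -/
theorem statement5 (n : ℕ) (hn : 0 < n) (m : ℕ)
    (e : Fin m ≃ Fin n × SubdivVert (apexGrid n) 1)
    (he : EnumConsecutive n m e) :
    (5 : ℕ∞) ≤ (attachPaths (Bn n) n m 2 e).egirth :=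
  girth_ge_five _ attach_noTri attach_noC4
end

section
/- Let G be a region intersection graph over a graph H witnessed by connected subgraphs (R_v)_{v∈V(G)}, let u, v be distinct vertices of G, and let Q_1,…,Q_n be pairwise anti-complete subsets of V(G) \ {u,v}, each inducing a connected subgraph of G and each containing a neighbor of u and a neighbor of v. Then every set S ⊆ V(H) such that in H − S there is no path from a vertex of V(R_u) \ S to a vertex of V(R_v) \ S satisfies |S| ≥ n. -/
/-- Reachability in `H` via a walk whose support stays in `T`. -/
def RchIn {β : Type*} (H : SimpleGraph β) (T : Set β) (x y : β) : Prop :=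
  ∃ p : H.Walk x y, ∀ z ∈ p.support, z ∈ T

lemma RchIn.mono {β : Type*} {H : SimpleGraph β} {T T' : Set β} {x y : β}
    (hTT : T ⊆ T') (h : RchIn H T x y) : RchIn H T' x y := by
  obtain ⟨p, hp⟩ := h
  exact ⟨p, fun z hz => hTT (hp z hz)⟩

lemma RchIn.trans {β : Type*} {H : SimpleGraph β} {T : Set β} {x y z : β}
    (h1 : RchIn H T x y) (h2 : RchIn H T y z) : RchIn H T x z := by
  obtain ⟨p, hp⟩ := h1
  obtain ⟨q, hq⟩ := h2
  refine ⟨p.append q, fun w hw => ?_⟩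
  rcases (SimpleGraph.Walk.mem_support_append_iff _ _).1 hw with h | h
  · exact hp w h
  · exact hq w h

lemma rchIn_of_connectedIn {β : Type*} {H : SimpleGraph β} {T : Set β}
    (hT : ConnectedIn H T) {x y : β} (hx : x ∈ T) (hy : y ∈ T) : RchIn H T x y := by
  obtain ⟨w⟩ := hT.preconnected ⟨x, hx⟩ ⟨y, hy⟩
  refine ⟨w.map ⟨Subtype.val, fun h => h⟩, fun z hz => ?_⟩
  rw [SimpleGraph.Walk.support_map] at hz
  obtain ⟨⟨z', hz'⟩, _, rfl⟩ := List.mem_map.1 hz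
  exact hz'

lemma reachable_induce_of_rchIn {β : Type*} {H : SimpleGraph β} {s : Set β} {x y : β}
    (h : RchIn H s x y) (hx : x ∈ s) (hy : y ∈ s) :
    (H.induce s).Reachable ⟨x, hx⟩ ⟨y, hy⟩ := by
  obtain ⟨p, hp⟩ := h
  induction p with
  | nil => exact SimpleGraph.Reachable.refl _
  | @cons a b c hab q ih =>
    have hb : b ∈ s := hp b (by simp)
    have h1 : (H.induce s).Adj ⟨a, hx⟩ ⟨b, hb⟩ := hab
    exact h1.reachable.trans (ih hb hy (fun z hz => hp z (by simp [hz])))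

lemma chain_rchIn {α β : Type*} (G : SimpleGraph α) (H : SimpleGraph β) (R : α → Set β)
    (hRconn : ∀ w, ConnectedIn H (R w))
    (hadj : ∀ a b : α, G.Adj a b → (R a ∩ R b).Nonempty)
    (Qs : Set α) (T : Set β) (hT : ∀ a ∈ Qs, R a ⊆ T) :
    ∀ (c d : Qs) (w : (G.induce Qs).Walk c d) (x : β), x ∈ R c → ∀ y ∈ R d, RchIn H T x y := by
  intro c d w
  induction w with
  | nil =>
    intro x hx y hy
    exact (rchIn_of_connectedIn (hRconn _) hx hy).mono (hT _ (by exact Subtype.mem _))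
  | @cons a b c hab q ih =>
    intro x hx y hy
    have hadj' : G.Adj a b := hab
    obtain ⟨z, hza, hzb⟩ := hadj _ _ hadj'
    have h1 : RchIn H T x z :=
      (rchIn_of_connectedIn (hRconn _) hx hza).mono (hT _ (Subtype.mem a))
    exact h1.trans (ih z hzb y hy)

/-- Let `G` be a region intersection graph over `H` witnessed by regions `R`, let
`u ≠ v` be vertices of `G`, and let `Q_1, …, Q_n` be pairwise anti-complete subsets of
`V(G) \ {u, v}`, each inducing a connected subgraph of `G` and each containing a
neighbor of `u` and a neighbor of `v`.  Then every `S ⊆ V(H)` such that `H − S` has no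
path from a vertex of `R_u \ S` to a vertex of `R_v \ S` satisfies `|S| ≥ n`. -/
theorem statement9 {α β : Type*} (G : SimpleGraph α) (H : SimpleGraph β)
    (R : α → Set β)
    (hRconn : ∀ w, ConnectedIn H (R w))
    (hrig : ∀ w w' : α, w ≠ w' → (G.Adj w w' ↔ (R w ∩ R w').Nonempty))
    (u v : α) (huv : u ≠ v)
    (n : ℕ) (Q : Fin n → Set α)
    (hQsub : ∀ i, Q i ⊆ ({u, v} : Set α)ᶜ)
    (hQdisj : Pairwise fun i j => Disjoint (Q i) (Q j))
    (hQanti : Pairwise fun i j => ∀ a ∈ Q i, ∀ b ∈ Q j, ¬ G.Adj a b)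
    (hQconn : ∀ i, ConnectedIn G (Q i))
    (hQu : ∀ i, ∃ a ∈ Q i, G.Adj u a)
    (hQv : ∀ i, ∃ a ∈ Q i, G.Adj v a)
    (S : Set β)
    (hsep : ∀ (a b : (Sᶜ : Set β)), (a : β) ∈ R u → (b : β) ∈ R v →
      ¬ (H.induce Sᶜ).Reachable a b) :
    (n : ℕ∞) ≤ S.encard := by
    classical
  set T : Fin n → Set β := fun i => ⋃ a ∈ Q i, R a with hTdef
  have key : ∀ i : Fin n, ∃ z, z ∈ S ∧ z ∈ T i := by
    intro i
    obtain ⟨a, haQ, hua⟩ := hQu i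
    obtain ⟨b, hbQ, hvb⟩ := hQv i
    have hau : a ≠ u := by
      intro h; exact (hQsub i haQ) (by simp [h])
    have hbv : b ≠ v := by
      intro h; exact (hQsub i hbQ) (by simp [h])
    obtain ⟨x, hxu, hxa⟩ := (hrig u a (Ne.symm hau)).1 hua
    obtain ⟨y, hyv, hyb⟩ := (hrig v b (Ne.symm hbv)).1 hvb
    obtain ⟨w⟩ := (hQconn i).preconnected ⟨a, haQ⟩ ⟨b, hbQ⟩
    have hT : ∀ c ∈ Q i, R c ⊆ T i := by
      intro c hc z hz
      exact Set.mem_biUnion hc hz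
    have hrch : RchIn H (T i) x y :=
      chain_rchIn G H R hRconn (fun a b hab => (hrig a b hab.ne).1 hab)
        (Q i) (T i) hT ⟨a, haQ⟩ ⟨b, hbQ⟩ w x hxa y hyb
    by_contra hcon
    push_neg at hcon
    obtain ⟨p, hp⟩ := hrch
    have hps : ∀ z ∈ p.support, z ∈ Sᶜ := fun z hz hzS => hcon z hzS (hp z hz)
    have hxS : x ∈ Sᶜ := hps x p.start_mem_support
    have hyS : y ∈ Sᶜ := hps y p.end_mem_support
    exact hsep ⟨x, hxS⟩ ⟨y, hyS⟩ hxu hyv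
      (reachable_induce_of_rchIn ⟨p, hps⟩ hxS hyS)
  choose f hfS hfT using key
  have hinj : Function.Injective f := by
    intro i j hij
    by_contra hne
    have hiT := hfT i
    have hjT : f i ∈ T j := hij ▸ hfT j
    obtain ⟨a, haQ, hfa⟩ := Set.mem_iUnion₂.1 hiT
    obtain ⟨b, hbQ, hfb⟩ := Set.mem_iUnion₂.1 hjT
    have hab : a ≠ b := by
      intro h
      exact (hQdisj hne).le_bot ⟨haQ, h ▸ hbQ⟩
    have : G.Adj a b := (hrig a b hab).2 ⟨f i, hfa, hfb⟩
    exact hQanti hne a haQ b hbQ this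
  have hsub : Set.range f ⊆ S := by
    rintro _ ⟨i, rfl⟩; exact hfS i
  calc (n : ℕ∞) = (Set.univ : Set (Fin n)).encard := by
        simp [Set.encard_univ]
    _ = (f '' Set.univ).encard := (hinj.injOn.encard_image).symm
    _ = (Set.range f).encard := by rw [Set.image_univ]
    _ ≤ S.encard := Set.encard_le_encard hsub
end

section
/- For all positive integers g and n, the graph G_{g,n} has girth at least g. -/
/-!
Every vertex of a cycle has two distinct neighbours on the cycle. A vertex of `P_j` that is not
joined to `B`, and (for a cycle inside `B`) an internal vertex of a subdivided edge, has all its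
neighbours on the cycle along a "thread" through it; so the cycle contains the whole thread up to
the first branching vertices on either side. Consecutive attachment vertices on `P_j` are `g` apart,
and a subdivided edge has `g` internal vertices, so in both cases the cycle has at least `g`
vertices.
-/

namespace SimpleGraph

variable {V : Type*} {G : SimpleGraph V}

def HasTwoNeighborsIn (G : SimpleGraph V) (S : Finset V) : Prop :=
  ∀ x ∈ S, ∃ y ∈ S, ∃ z ∈ S, y ≠ z ∧ G.Adj x y ∧ G.Adj x z

/-- At `t = 0` the truncated subtraction leaves `f 1` as the only admissible neighbour. -/
def AdjOnlyAlong (G : SimpleGraph V) (S : Finset V) (f : ℕ → V) (t : ℕ) : Prop :=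
  ∀ y ∈ S, G.Adj (f t) y → y = f (t - 1) ∨ y = f (t + 1)

lemma Walk.IsCycle.hasTwoNeighborsIn_support [DecidableEq V] {u : V} {c : G.Walk u u}
    (hc : c.IsCycle) : G.HasTwoNeighborsIn c.support.toFinset := by
  intro x hx
  obtain ⟨y, z, hyz, hN⟩ := Set.ncard_eq_two.mp
    (hc.ncard_neighborSet_toSubgraph_eq_two (List.mem_toFinset.mp hx))
  have hy : c.toSubgraph.Adj x y := by simp [← Subgraph.mem_neighborSet, hN]
  have hz : c.toSubgraph.Adj x z := by simp [← Subgraph.mem_neighborSet, hN]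
  refine ⟨y, ?_, z, ?_, hyz, hy.adj_sub, hz.adj_sub⟩ <;>
    rw [List.mem_toFinset, ← Walk.mem_verts_toSubgraph]
  exacts [hy.symm.fst_mem, hz.symm.fst_mem]

lemma Walk.IsCycle.card_support_toFinset_le [DecidableEq V] {u : V} {c : G.Walk u u}
    (hc : c.IsCycle) : c.support.toFinset.card ≤ c.length := by
  rw [← c.cons_tail_support, List.toFinset_cons,
    Finset.insert_eq_of_mem (List.mem_toFinset.mpr (c.end_mem_tail_support hc.not_nil))]
  simpa using c.support.tail.toFinset_card_le

namespace HasTwoNeighborsIn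

variable {S : Finset V} {f : ℕ → V} {t : ℕ}

lemma adj_mem_of_adjOnlyAlong (hS : G.HasTwoNeighborsIn S) (ht : f t ∈ S)
    (hf : G.AdjOnlyAlong S f t) :
    (G.Adj (f t) (f (t - 1)) ∧ f (t - 1) ∈ S) ∧ (G.Adj (f t) (f (t + 1)) ∧ f (t + 1) ∈ S) := by
  obtain ⟨y, hy, z, hz, hyz, hty, htz⟩ := hS _ ht
  rcases hf y hy hty with rfl | rfl <;> rcases hf z hz htz with rfl | rfl
  exacts [absurd rfl hyz, ⟨⟨hty, hy⟩, htz, hz⟩, ⟨⟨htz, hz⟩, hty, hy⟩, absurd rfl hyz]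

lemma exists_not_adjOnlyAlong_le (hS : G.HasTwoNeighborsIn S) (ht : f t ∈ S) :
    ∃ a ≤ t, ¬ G.AdjOnlyAlong S f a ∧ ∀ s, a ≤ s → s ≤ t → f s ∈ S := by
  induction t with
  | zero =>
    refine ⟨0, le_rfl, fun hf => G.irrefl (hS.adj_mem_of_adjOnlyAlong ht hf).1.1,
      fun s _ hs => by rwa [Nat.le_zero.mp hs]⟩
  | succ t ih =>
    by_cases hf : G.AdjOnlyAlong S f (t + 1)
    · obtain ⟨a, hat, ha, hmem⟩ := ih (hS.adj_mem_of_adjOnlyAlong ht hf).1.2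
      refine ⟨a, by omega, ha, fun s has hs => ?_⟩
      rcases Nat.lt_or_eq_of_le hs with hs | rfl
      exacts [hmem s has (by omega), ht]
    · exact ⟨t + 1, le_rfl, hf, fun s h₁ h₂ => by rwa [le_antisymm h₂ h₁]⟩

lemma exists_not_adjOnlyAlong_ge (hS : G.HasTwoNeighborsIn S) {N : ℕ} (hN : f (N + 1) = f N)
    (htN : t ≤ N) (ht : f t ∈ S) :
    ∃ b, t ≤ b ∧ b ≤ N ∧ ¬ G.AdjOnlyAlong S f b ∧ ∀ s, t ≤ s → s ≤ b → f s ∈ S := by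
  obtain ⟨k, rfl⟩ := Nat.exists_eq_add_of_le htN
  induction k generalizing t with
  | zero =>
    refine ⟨t, le_rfl, le_rfl, fun hf => ?_, fun s h₁ h₂ => by rwa [le_antisymm h₂ h₁]⟩
    have := (hS.adj_mem_of_adjOnlyAlong ht hf).2.1
    rw [Nat.add_zero] at hN
    exact G.irrefl (hN ▸ this)
  | succ k ih =>
    by_cases hf : G.AdjOnlyAlong S f t
    · obtain ⟨b, htb, hbN, hb, hmem⟩ := ih (hS.adj_mem_of_adjOnlyAlong ht hf).2.2
        (by rwa [Nat.add_right_comm t 1 k]) (by omega)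
      refine ⟨b, by omega, by omega, hb, fun s hts hs => ?_⟩
      obtain rfl | hts := eq_or_lt_of_le hts
      exacts [ht, hmem s hts hs]
    · exact ⟨t, le_rfl, by omega, hf, fun s h₁ h₂ => by rwa [le_antisymm h₂ h₁]⟩

end HasTwoNeighborsIn

end SimpleGraph

section Subdivision

variable {W : Type*} {H : SimpleGraph W} {g : ℕ}

lemma SubdivRel.symm {a b} (h : SubdivRel H g a b) : SubdivRel H g b a :=
  ⟨h.2.1.symm, h.1.symm, by have := h.2.2; omega⟩

lemma SubdivRel.eq_of_subdivRel {a b c} (hab : SubdivRel H g a b) (hbc : SubdivRel H g b c) :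
    a = c := by
  obtain ⟨h₁, h₂, h₃⟩ := hab
  obtain ⟨h₄, h₅, h₆⟩ := hbc
  exact Prod.ext (Subtype.ext (Prod.ext (h₁.trans h₅) (h₂.trans h₄))) (Fin.ext (by omega))

/-- Two steps of `SubdivRel` cancel, so its equivalence closure adds only the diagonal. -/
lemma quot_mk_subdivRel_eq_iff {a b} :
    Quot.mk (SubdivRel H g) a = Quot.mk (SubdivRel H g) b ↔ a = b ∨ SubdivRel H g a b := by
  refine ⟨fun h => ?_, ?_⟩
  · have h' := Quot.eq.mp h
    clear h
    induction h' with
    | rel x y hxy => exact Or.inr hxy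
    | refl => exact Or.inl rfl
    | symm x y _ ih => exact ih.imp Eq.symm SubdivRel.symm
    | trans x y z _ _ ih₁ ih₂ =>
      rcases ih₁ with rfl | h₁
      · exact ih₂
      · rcases ih₂ with rfl | h₂
        exacts [Or.inr h₁, Or.inl (h₁.eq_of_subdivRel h₂)]
  · rintro (rfl | h)
    exacts [rfl, Quot.sound h]

variable (g) in
/-- The path `d.1.1 = x₀, x₁, …, x_g, x_{g+1} = d.1.2` replacing the edge `d` in `subdiv H g`,
extended constantly beyond `g + 1`. The codomain is `SubdivVert H g` unfolded, which keeps
rewriting with `dif_pos`/`dif_neg` inside it type-correct. -/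
def subdivEdgeVert (d : {d : W × W // H.Adj d.1 d.2}) (s : ℕ) : W ⊕ Quot (SubdivRel H g) :=
  if h₀ : s = 0 then .inl d.1.1
  else if h : s ≤ g then .inr (Quot.mk _ (d, ⟨s - 1, by omega⟩))
  else .inl d.1.2

variable {d : {d : W × W // H.Adj d.1 d.2}} {s : ℕ}

lemma subdivEdgeVert_of_lt (hs : g < s) : subdivEdgeVert g d s = .inl d.1.2 := by
  rw [subdivEdgeVert, dif_neg (by omega), dif_neg (by omega)]

lemma subdivEdgeVert_succ (i : Fin g) :
    subdivEdgeVert g d (i + 1) = .inr (Quot.mk _ (d, i)) := by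
  rw [subdivEdgeVert, dif_neg i.val.succ_ne_zero, dif_pos (show (i : ℕ) + 1 ≤ g from i.isLt)]
  rfl

lemma eq_zero_or_exists_fin_or_lt (g s : ℕ) : s = 0 ∨ (∃ i : Fin g, s = i + 1) ∨ g < s := by
  by_cases h : s = 0 ∨ g < s
  · tauto
  · exact Or.inr (Or.inl ⟨⟨s - 1, by omega⟩, by dsimp only; omega⟩)

lemma subdivEdgeVert_swap (hs : s ≤ g + 1) :
    subdivEdgeVert g ⟨d.1.swap, d.2.symm⟩ s = subdivEdgeVert g d (g + 1 - s) := by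
  obtain rfl | ⟨i, rfl⟩ | hs' := eq_zero_or_exists_fin_or_lt g s
  · exact (subdivEdgeVert_of_lt (by omega)).symm
  · have hi : g + 1 - (i + 1) = (⟨g - 1 - i, by omega⟩ : Fin g) + 1 := by dsimp only; omega
    rw [subdivEdgeVert_succ, hi, subdivEdgeVert_succ]
    exact congrArg Sum.inr (Quot.sound ⟨rfl, rfl, by dsimp only; omega⟩)
  · rw [subdivEdgeVert_of_lt hs', show g + 1 - s = 0 by omega]
    rfl

lemma subdivEdgeVert_eq_internal {d' : {d : W × W // H.Adj d.1 d.2}} {s' : ℕ}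
    (hs₁ : 1 ≤ s) (hs₂ : s ≤ g) (h : subdivEdgeVert g d' s' = subdivEdgeVert g d s) :
    (d' = d ∧ s' = s) ∨ (d' = ⟨d.1.swap, d.2.symm⟩ ∧ s' = g + 1 - s) := by
  obtain ⟨i, rfl⟩ : ∃ i : Fin g, s = i + 1 := ⟨⟨s - 1, by omega⟩, by dsimp only; omega⟩
  rw [subdivEdgeVert_succ] at h
  obtain rfl | ⟨i', rfl⟩ | hs' := eq_zero_or_exists_fin_or_lt g s'
  · exact absurd h Sum.inl_ne_inr
  · rw [subdivEdgeVert_succ] at h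
    rcases quot_mk_subdivRel_eq_iff.mp (Sum.inr.inj h) with h | ⟨r₁, r₂, r₃⟩
    · obtain ⟨rfl, rfl⟩ := Prod.mk.inj h
      exact Or.inl ⟨rfl, rfl⟩
    · dsimp only at r₁ r₂ r₃
      exact Or.inr ⟨Subtype.ext (Prod.ext r₁ r₂), by omega⟩
  · rw [subdivEdgeVert_of_lt hs'] at h
    exact absurd h Sum.inl_ne_inr

lemma subdivEdgeVert_injOn : Set.InjOn (subdivEdgeVert g d) (Set.Icc 1 g) := by
  intro s₁ hs₁ s₂ _ h
  rcases subdivEdgeVert_eq_internal hs₁.1 hs₁.2 h.symm with ⟨-, h⟩ | ⟨h, -⟩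
  · exact h.symm
  · exact absurd (congrArg (fun d => d.1.1) h) d.2.ne

lemma exists_subdivEdgeVert_swap {x y : SubdivVert H g}
    (h : ∃ d s, s ≤ g ∧ y = subdivEdgeVert g d s ∧ x = subdivEdgeVert g d (s + 1)) :
    ∃ d s, s ≤ g ∧ x = subdivEdgeVert g d s ∧ y = subdivEdgeVert g d (s + 1) := by
  obtain ⟨d, s, hs, rfl, rfl⟩ := h
  refine ⟨⟨d.1.swap, d.2.symm⟩, g - s, Nat.sub_le _ _, ?_, ?_⟩ <;>
    rw [subdivEdgeVert_swap (by omega)] <;> congr 1 <;> omega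

lemma exists_subdivEdgeVert_of_subdiv_adj {x y : SubdivVert H g} (h : (subdiv H g).Adj x y) :
    ∃ d s, s ≤ g ∧ x = subdivEdgeVert g d s ∧ y = subdivEdgeVert g d (s + 1) := by
  obtain ⟨-, h | h⟩ := h
  on_goal 2 => apply exists_subdivEdgeVert_swap
  all_goals
    rcases h with ⟨rfl, u, v, huv, rfl, rfl⟩ | ⟨d, i, hi, rfl, rfl⟩ | ⟨d, i, j, hij, rfl, rfl⟩
    · exact ⟨⟨(u, v), huv⟩, 0, le_rfl, rfl,
        (subdivEdgeVert_of_lt (d := ⟨(u, v), huv⟩) one_pos).symm⟩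
    · refine ⟨d, 0, Nat.zero_le _, rfl, ?_⟩
      rw [← subdivEdgeVert_succ, hi]
    · refine ⟨d, i + 1, i.isLt, (subdivEdgeVert_succ i).symm, ?_⟩
      rw [← subdivEdgeVert_succ, hij]

lemma subdiv_adj_subdivEdgeVert {y : SubdivVert H g} (hs₁ : 1 ≤ s) (hs₂ : s ≤ g)
    (h : (subdiv H g).Adj (subdivEdgeVert g d s) y) :
    y = subdivEdgeVert g d (s - 1) ∨ y = subdivEdgeVert g d (s + 1) := by
  obtain ⟨d', s', hs', hx, rfl⟩ := exists_subdivEdgeVert_of_subdiv_adj h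
  rcases subdivEdgeVert_eq_internal hs₁ hs₂ hx.symm with ⟨rfl, rfl⟩ | ⟨rfl, rfl⟩
  · exact Or.inr rfl
  · left
    rw [subdivEdgeVert_swap (by omega)]
    congr 1
    omega

end Subdivision

lemma nCopies_adj {V : Type*} {K : SimpleGraph V} {n : ℕ} {x y : Fin n × V} :
    (nCopies n K).Adj x y ↔ x.1 = y.1 ∧ K.Adj x.2 y.2 := by
  simp only [nCopies, SimpleGraph.fromRel_adj]
  refine ⟨?_, fun h => ⟨fun hxy => K.irrefl (hxy ▸ h.2), Or.inl h⟩⟩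
  rintro ⟨-, h | h⟩
  exacts [h, ⟨h.1.symm, h.2.symm⟩]

section AttachPaths

variable {β : Type*} {B : SimpleGraph β} {n m g : ℕ} {e : Fin m ≃ β}

lemma attachPaths_adj_inl_inl {u v : β} :
    (attachPaths B n m g e).Adj (.inl u) (.inl v) ↔ B.Adj u v := by
  simp only [attachPaths, SimpleGraph.fromRel_adj]
  constructor
  · rintro ⟨-, (⟨u', v', hu, hv, h⟩ | h) | (⟨u', v', hv, hu, h⟩ | h)⟩
    · rwa [Sum.inl.inj hu, Sum.inl.inj hv]
    · simp at h
    · rwa [Sum.inl.inj hu, Sum.inl.inj hv, B.adj_comm]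
    · simp at h
  · exact fun h => ⟨fun huv => B.irrefl (Sum.inl.inj huv ▸ h), Or.inl (Or.inl ⟨u, v, rfl, rfl, h⟩)⟩

lemma attachPaths_adj_inr {j : Fin n} {k : Fin (g * m)} {y : β ⊕ (Fin n × Fin (g * m))}
    (h : (attachPaths B n m g e).Adj (.inr (j, k)) y) :
    (∃ l : Fin (g * m), ((l : ℕ) + 1 = k ∨ (k : ℕ) + 1 = l) ∧ y = .inr (j, l)) ∨
    (∃ i : Fin m, (k : ℕ) + 2 = g * (i + 1) ∧ y = .inl (e i)) := by
  simp only [attachPaths, SimpleGraph.fromRel_adj] at h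
  obtain ⟨-, (⟨_, _, h, -, -⟩ | ⟨j', k', l', h, rfl, hkl⟩ | ⟨j', i, k', hk, h, rfl⟩) |
      (⟨_, _, -, h, -⟩ | ⟨j', k', l', rfl, h, hkl⟩ | ⟨_, _, _, -, -, h⟩)⟩ := h
  all_goals first | exact absurd h Sum.inr_ne_inl | obtain ⟨rfl, rfl⟩ := Prod.mk.inj (Sum.inr.inj h)
  · exact Or.inl ⟨l', Or.inr hkl, rfl⟩
  · exact Or.inr ⟨i, hk, rfl⟩
  · exact Or.inl ⟨k', Or.inl hkl, rfl⟩

def IsAttachIndex (g m k : ℕ) : Prop := ∃ i : Fin m, k + 2 = g * (i + 1)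

lemma IsAttachIndex.add_le {a b : ℕ} (ha : IsAttachIndex g m a) (hb : IsAttachIndex g m b)
    (hab : a < b) : a + g ≤ b := by
  obtain ⟨i, hi⟩ := ha
  obtain ⟨i', hi'⟩ := hb
  have hii' : (i : ℕ) + 1 < i' + 1 := Nat.lt_of_mul_lt_mul_left (a := g) (by omega)
  have := Nat.mul_le_mul_left g (Nat.succ_le_of_lt hii')
  rw [Nat.mul_succ] at this
  omega

variable (β) in
def pathVert (j : Fin n) (hgm : 0 < g * m) (s : ℕ) : β ⊕ (Fin n × Fin (g * m)) :=
  .inr (j, ⟨min s (g * m - 1), by omega⟩)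

variable {j : Fin n} {S : Finset (β ⊕ (Fin n × Fin (g * m)))}

lemma pathVert_of_lt (hgm : 0 < g * m) {s : ℕ} (hs : s < g * m) :
    pathVert β j hgm s = .inr (j, ⟨s, hs⟩) := by
  simp only [pathVert, Sum.inr.injEq, Prod.mk.injEq, Fin.mk.injEq, true_and]
  omega

lemma pathVert_stop (hgm : 0 < g * m) :
    pathVert β j hgm (g * m - 1 + 1) = pathVert β j hgm (g * m - 1) := by
  simp only [pathVert, Sum.inr.injEq, Prod.mk.injEq, Fin.mk.injEq, true_and]
  omega

lemma pathVert_injOn (hgm : 0 < g * m) : Set.InjOn (pathVert β j hgm) (Set.Iio (g * m)) := by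
  intro s hs s' hs' h
  rw [pathVert_of_lt hgm hs, pathVert_of_lt hgm hs'] at h
  simpa [Fin.ext_iff] using h

lemma adjOnlyAlong_pathVert (hgm : 0 < g * m) {s : ℕ} (hs : s < g * m)
    (hna : ¬ IsAttachIndex g m s) :
    (attachPaths B n m g e).AdjOnlyAlong S (pathVert β j hgm) s := by
  intro y _ hy
  rw [pathVert_of_lt hgm hs] at hy
  rcases attachPaths_adj_inr hy with ⟨l, hl, rfl⟩ | ⟨i, hi, -⟩
  · simp only [pathVert, Sum.inr.injEq, Prod.mk.injEq, true_and, Fin.ext_iff] at hl ⊢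
    omega
  · exact absurd ⟨i, hi⟩ hna

/-- A path vertex has at most one neighbour off the path, and its neighbours on the path are not
attachment vertices, since these are `g ≥ 2` apart. -/
lemma exists_not_isAttachIndex_mem (hg : 2 ≤ g) (hS : (attachPaths B n m g e).HasTwoNeighborsIn S)
    {k : Fin (g * m)} (hk : .inr (j, k) ∈ S) :
    ∃ p : Fin (g * m), ¬ IsAttachIndex g m p ∧ .inr (j, p) ∈ S := by
  by_cases hk' : IsAttachIndex g m k
  · have hnear : ∀ l : Fin (g * m), ((l : ℕ) + 1 = k ∨ (k : ℕ) + 1 = l) →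
        ¬ IsAttachIndex g m l := by
      rintro l (hl | hl) hl'
      · have := hl'.add_le hk' (by omega)
        omega
      · have := hk'.add_le hl' (by omega)
        omega
    obtain ⟨y, hy, z, hz, hyz, hky, hkz⟩ := hS _ hk
    rcases attachPaths_adj_inr hky with ⟨l, hl, rfl⟩ | ⟨i, hi, rfl⟩
    · exact ⟨l, hnear l hl, hy⟩
    rcases attachPaths_adj_inr hkz with ⟨l, hl, rfl⟩ | ⟨i', hi', rfl⟩
    · exact ⟨l, hnear l hl, hz⟩
    have : (i : ℕ) + 1 = i' + 1 := Nat.eq_of_mul_eq_mul_left (by omega) (hi.symm.trans hi')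
    exact absurd (by rw [Fin.ext (Nat.succ_injective this)]) hyz
  · exact ⟨k, hk', hk⟩

/-- A cycle through `P_j` runs along `P_j` between two consecutive attachment vertices. -/
lemma card_le_of_inr_mem (hg : 2 ≤ g) (hS : (attachPaths B n m g e).HasTwoNeighborsIn S)
    {k : Fin (g * m)} (hk : .inr (j, k) ∈ S) : g ≤ S.card := by
  obtain ⟨p, hp, hpS⟩ := exists_not_isAttachIndex_mem hg hS hk
  have hgm : 0 < g * m := p.pos
  have hfp : pathVert β j hgm p = .inr (j, p) := pathVert_of_lt hgm p.isLt
  have hattach : ∀ s < g * m,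
      ¬ (attachPaths B n m g e).AdjOnlyAlong S (pathVert β j hgm) s → IsAttachIndex g m s :=
    fun s hs h => by_contra fun hna => h (adjOnlyAlong_pathVert hgm hs hna)
  obtain ⟨a, hap, ha, haS⟩ := hS.exists_not_adjOnlyAlong_le (hfp ▸ hpS)
  obtain ⟨b, hpb, hbN, hb, hbS⟩ :=
    hS.exists_not_adjOnlyAlong_ge (pathVert_stop hgm) (by omega) (hfp ▸ hpS)
  have ha' := hattach a (by omega) ha
  have hb' := hattach b (by omega) hb
  have hap' : a < p := lt_of_le_of_ne hap fun h => hp (h ▸ ha')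
  have hpb' : p < b := lt_of_le_of_ne hpb fun h => hp (h ▸ hb')
  have hgap := ha'.add_le hb' (hap'.trans hpb')
  have hcard := Finset.card_le_card_of_injOn (pathVert β j hgm) (s := Finset.Icc a b) (t := S)
    (fun s hs => ?_) ((pathVert_injOn hgm).mono fun s hs => ?_)
  · rw [Nat.card_Icc] at hcard
    omega
  · obtain ⟨hs₁, hs₂⟩ := Finset.mem_Icc.mp hs
    rcases le_total s p with hsp | hsp
    exacts [haS s hs₁ hsp, hbS s hsp hs₂]
  · have := (Finset.mem_Icc.mp hs).2
    exact Set.mem_Iio.mpr (by omega)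

end AttachPaths

section SubdivisionThread

variable {W : Type*} {H : SimpleGraph W} {n m g : ℕ} {e : Fin m ≃ Fin n × SubdivVert H g}
  {S : Finset ((Fin n × SubdivVert H g) ⊕ (Fin n × Fin (g * m)))}

lemma adjOnlyAlong_subdivEdgeVert (hnp : ∀ p, .inr p ∉ S) (c : Fin n)
    (d : {d : W × W // H.Adj d.1 d.2}) {s : ℕ} (hs₁ : 1 ≤ s) (hs₂ : s ≤ g) :
    (attachPaths (nCopies n (subdiv H g)) n m g e).AdjOnlyAlong S
      (fun t => .inl (c, subdivEdgeVert g d t)) s := by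
  rintro (⟨c', w⟩ | p) hy h
  · obtain ⟨rfl, hw⟩ := nCopies_adj.mp (attachPaths_adj_inl_inl.mp h)
    rcases subdiv_adj_subdivEdgeVert hs₁ hs₂ hw with rfl | rfl
    exacts [Or.inl rfl, Or.inr rfl]
  · exact absurd hy (hnp p)

lemma exists_subdivEdgeVert_mem (hg : 1 ≤ g)
    (hS : (attachPaths (nCopies n (subdiv H g)) n m g e).HasTwoNeighborsIn S)
    (hnp : ∀ p, .inr p ∉ S) (hne : S.Nonempty) :
    ∃ c d s, 1 ≤ s ∧ s ≤ g ∧ .inl (c, subdivEdgeVert g d s) ∈ S := by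
  obtain ⟨x, hx⟩ := hne
  obtain ⟨y, hy, -, -, -, hxy, -⟩ := hS _ hx
  rcases x with ⟨c, w⟩ | p
  swap
  · exact absurd hx (hnp p)
  rcases y with ⟨c', w'⟩ | p
  swap
  · exact absurd hy (hnp p)
  obtain ⟨rfl, hw⟩ := nCopies_adj.mp (attachPaths_adj_inl_inl.mp hxy)
  obtain ⟨d, s, hs, rfl, rfl⟩ := exists_subdivEdgeVert_of_subdiv_adj hw
  rcases Nat.eq_zero_or_pos s with rfl | hs₀
  exacts [⟨c, d, 1, le_rfl, hg, hy⟩, ⟨c, d, s, hs₀, hs, hx⟩]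

/-- A cycle avoiding the paths `P_j` runs through a whole subdivided edge. -/
lemma card_le_of_forall_not_inr (hg : 1 ≤ g)
    (hS : (attachPaths (nCopies n (subdiv H g)) n m g e).HasTwoNeighborsIn S)
    (hnp : ∀ p, .inr p ∉ S) (hne : S.Nonempty) : g ≤ S.card := by
  obtain ⟨c, d, t, ht₁, ht₂, htS⟩ := exists_subdivEdgeVert_mem hg hS hnp hne
  set f : ℕ → (Fin n × SubdivVert H g) ⊕ (Fin n × Fin (g * m)) :=
    fun s => .inl (c, subdivEdgeVert g d s) with hf
  have hinner : ∀ s, 1 ≤ s → s ≤ g →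
      (attachPaths (nCopies n (subdiv H g)) n m g e).AdjOnlyAlong S f s :=
    fun s h₁ h₂ => adjOnlyAlong_subdivEdgeVert hnp c d h₁ h₂
  have hstop : f (g + 1 + 1) = f (g + 1) := by
    simp only [hf, subdivEdgeVert_of_lt (by omega : g < g + 1 + 1),
      subdivEdgeVert_of_lt (lt_add_one g)]
  obtain ⟨a, hat, ha, haS⟩ := hS.exists_not_adjOnlyAlong_le (f := f) htS
  obtain ⟨b, htb, hbN, hb, hbS⟩ := hS.exists_not_adjOnlyAlong_ge hstop (by omega) htS
  have ha₀ : a = 0 := by_contra fun h => ha (hinner a (by omega) (by omega))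
  have hgb : g < b := by_contra fun h => hb (hinner b (by omega) (by omega))
  have hcard := Finset.card_le_card_of_injOn f (s := Finset.Icc 1 g) (t := S)
    (fun s hs => ?_) (fun s hs s' hs' h => ?_)
  · simpa using hcard
  · obtain ⟨h₁, h₂⟩ := Finset.mem_Icc.mp hs
    rcases le_total s t with h | h
    exacts [haS s (by omega) h, hbS s h (by omega)]
  · exact subdivEdgeVert_injOn (by simpa using hs) (by simpa using hs')
      (Prod.mk.inj (Sum.inl.inj h)).2

lemma card_le_of_hasTwoNeighborsIn
    (hS : (attachPaths (nCopies n (subdiv H g)) n m g e).HasTwoNeighborsIn S)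
    (hne : S.Nonempty) : g ≤ S.card := by
  rcases lt_or_ge g 2 with hg | hg
  · have := hne.card_pos
    omega
  by_cases hpath : ∃ p, .inr p ∈ S
  · obtain ⟨⟨j, k⟩, hk⟩ := hpath
    exact card_le_of_inr_mem hg hS hk
  · exact card_le_of_forall_not_inr (by omega) hS (not_exists.mp hpath) hne

end SubdivisionThread

theorem statement15_general (g n : ℕ) (m : ℕ)
    (e : Fin m ≃ Fin n × SubdivVert (apexGrid n) g) :
    (g : ℕ∞) ≤ (attachPaths (nCopies n (subdiv (apexGrid n) g)) n m g e).egirth := by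
  classical
  refine SimpleGraph.le_egirth.mpr fun a c hc => ?_
  have hne : c.support.toFinset.Nonempty := ⟨a, List.mem_toFinset.mpr c.start_mem_support⟩
  exact_mod_cast (card_le_of_hasTwoNeighborsIn hc.hasTwoNeighborsIn_support hne).trans
    hc.card_support_toFinset_le

/-- For all positive integers `g` and `n`, the graph `G_{g,n}` — obtained from
`B_{g,n}` (the disjoint union of `n` copies of `A_n^(g)`, with its `m` vertices
enumerated so that the vertices of each copy are consecutive) by attaching `n` disjoint
paths with `g * m` vertices, joining the `(g*i − 1)`-st vertex of each path to `b_i` —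
has girth at least `g`. -/
theorem statement15 (g n : ℕ) (hg : 0 < g) (hn : 0 < n) (m : ℕ)
    (e : Fin m ≃ Fin n × SubdivVert (apexGrid n) g)
    (he : EnumConsecutive n m e) :
    (g : ℕ∞) ≤ (attachPaths (nCopies n (subdiv (apexGrid n) g)) n m g e).egirth :=
  statement15_general g n m e
end
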